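/- arXiv:1504.02544 — 6 statements merged into one kernel-verified Lean document; each statement's English description precedes it below -/
import Mathlib

section
/- Let x_1 = (r, sqrt(1-r^2), 0, ..., 0) and x_2 = (r, -sqrt(1-r^2), 0, ..., 0) be points on S^{d-1} with -1 < r < 1, and let x_1' = (r, 0, ..., 0, sqrt(1-r^2)), x_2' = (r, 0, ..., 0, -sqrt(1-r^2)). Then for any unit vector y = (c_1,...,c_{d-1}, 0) on S^{d-1} with last coordinate zero, |y - x_1|^2 |y - x_2|^2 = (2 - 2 c_1 r)^2 - 4 c_2^2 (1 - r^2) ≤ (2 - 2 c_1 r)^2 = |y - x_1'|^2 |y - x_2'|^2, with equality if and only if c_2 = 0. -/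
/-!
Each of the four points is a unit vector supported on two coordinates, so for a unit vector `y`
we have `‖y - x‖² = 2 - 2⟪y, x⟫`, an affine expression in two coordinates of `y`. For the pair
`x₁, x₂` the two factors are `(2 - 2c₁r) ∓ 2c₂√(1 - r²)`, whose product is a difference of
squares; for `x₁', x₂'` the second term vanishes because the last coordinate of `y` is zero.
-/

open EuclideanSpace

lemma norm_sub_sq_eq_two_sub_inner {E : Type*} [NormedAddCommGroup E] [InnerProductSpace ℝ E]
    {x y : E} (hx : ‖x‖ = 1) (hy : ‖y‖ = 1) : ‖y - x‖ ^ 2 = 2 - 2 * inner ℝ y x := by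
  rw [norm_sub_sq_real, hx, hy]
  ring

namespace EuclideanSpace

variable {ι : Type*} [DecidableEq ι] {a b : ι} {p q : ℝ}

lemma eq_single_add_single (hab : a ≠ b) {x : EuclideanSpace ℝ ι}
    (hx : ∀ i, x i = if i = a then p else if i = b then q else 0) :
    x = single a p + single b q := by
  ext i
  rw [hx i]
  split_ifs <;> simp_all

lemma inner_single_add_single_right [Fintype ι] (y : EuclideanSpace ℝ ι) :
    inner ℝ y (single a p + single b q) = y a * p + y b * q := by
  simp only [inner_add_right, inner_single_right, conj_trivial]
  ring

lemma norm_single_add_single_sq [Fintype ι] (hab : a ≠ b) :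
    ‖single a p + single b q‖ ^ 2 = p ^ 2 + q ^ 2 := by
  rw [norm_add_sq_real, inner_single_right, PiLp.single_apply, if_neg hab.symm]
  simp only [PiLp.norm_single, Real.norm_eq_abs, sq_abs, map_zero]
  ring

lemma norm_sub_sq_of_eq_single_add_single [Fintype ι] (hab : a ≠ b) (hpq : p ^ 2 + q ^ 2 = 1)
    {x y : EuclideanSpace ℝ ι} (hy : ‖y‖ = 1)
    (hx : ∀ i, x i = if i = a then p else if i = b then q else 0) :
    ‖y - x‖ ^ 2 = 2 - 2 * (y a * p + y b * q) := by
  have hx_norm : ‖x‖ = 1 := by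
    rw [← pow_eq_one_iff_of_nonneg (norm_nonneg x) two_ne_zero, eq_single_add_single hab hx,
      norm_single_add_single_sq hab, hpq]
  rw [norm_sub_sq_eq_two_sub_inner hx_norm hy, eq_single_add_single hab hx,
    inner_single_add_single_right]

end EuclideanSpace

/-- The key perturbation inequality in the monotonicity theorem: rotating the pair
`x_1, x_2` out of the degenerate hyperplane strictly increases the distance product to
any point `y` of the configuration with nonzero second coordinate. -/
theorem perturbation_inequality (d : ℕ) (hd : 3 ≤ d) (r : ℝ) (hr₁ : -1 < r) (hr₂ : r < 1)
    (x₁ x₂ x₁' x₂' : EuclideanSpace ℝ (Fin d))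
    (hx₁ : ∀ i : Fin d, x₁ i = if (i : ℕ) = 0 then r
      else if (i : ℕ) = 1 then Real.sqrt (1 - r ^ 2) else 0)
    (hx₂ : ∀ i : Fin d, x₂ i = if (i : ℕ) = 0 then r
      else if (i : ℕ) = 1 then -Real.sqrt (1 - r ^ 2) else 0)
    (hx₁' : ∀ i : Fin d, x₁' i = if (i : ℕ) = 0 then r
      else if (i : ℕ) = d - 1 then Real.sqrt (1 - r ^ 2) else 0)
    (hx₂' : ∀ i : Fin d, x₂' i = if (i : ℕ) = 0 then r
      else if (i : ℕ) = d - 1 then -Real.sqrt (1 - r ^ 2) else 0)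
    (y : EuclideanSpace ℝ (Fin d)) (hy : ‖y‖ = 1)
    (hylast : y ⟨d - 1, by omega⟩ = 0) :
    ‖y - x₁‖ ^ 2 * ‖y - x₂‖ ^ 2
        = (2 - 2 * y ⟨0, by omega⟩ * r) ^ 2
          - 4 * (y ⟨1, by omega⟩) ^ 2 * (1 - r ^ 2) ∧
      ‖y - x₁‖ ^ 2 * ‖y - x₂‖ ^ 2 ≤ (2 - 2 * y ⟨0, by omega⟩ * r) ^ 2 ∧
      (2 - 2 * y ⟨0, by omega⟩ * r) ^ 2 = ‖y - x₁'‖ ^ 2 * ‖y - x₂'‖ ^ 2 ∧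
      (‖y - x₁‖ ^ 2 * ‖y - x₂‖ ^ 2 = ‖y - x₁'‖ ^ 2 * ‖y - x₂'‖ ^ 2 ↔
        y ⟨1, by omega⟩ = 0) := by
  have hr : 0 < 1 - r ^ 2 := by nlinarith
  set s := Real.sqrt (1 - r ^ 2)
  have hs : s ^ 2 = 1 - r ^ 2 := Real.sq_sqrt hr.le
  have hunit : r ^ 2 + s ^ 2 = 1 := by rw [hs]; ring
  have hunit' : r ^ 2 + (-s) ^ 2 = 1 := by rw [neg_sq, hunit]
  have h01 : (⟨0, by omega⟩ : Fin d) ≠ ⟨1, by omega⟩ := by simp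
  have h0last : (⟨0, by omega⟩ : Fin d) ≠ ⟨d - 1, by omega⟩ := by simp; omega
  rw [norm_sub_sq_of_eq_single_add_single h01 hunit hy (by simpa [Fin.ext_iff] using hx₁),
    norm_sub_sq_of_eq_single_add_single h01 hunit' hy (by simpa [Fin.ext_iff] using hx₂),
    norm_sub_sq_of_eq_single_add_single h0last hunit hy (by simpa [Fin.ext_iff] using hx₁'),
    norm_sub_sq_of_eq_single_add_single h0last hunit' hy (by simpa [Fin.ext_iff] using hx₂'),
    hylast]
  set c₀ := y ⟨0, by omega⟩
  set c₁ := y ⟨1, by omega⟩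
  have product : (2 - 2 * (c₀ * r + c₁ * s)) * (2 - 2 * (c₀ * r + c₁ * -s)) =
      (2 - 2 * c₀ * r) ^ 2 - 4 * c₁ ^ 2 * (1 - r ^ 2) := by
    linear_combination (-4 * c₁ ^ 2) * hs
  have primed :
      (2 - 2 * c₀ * r) ^ 2 = (2 - 2 * (c₀ * r + 0 * s)) * (2 - 2 * (c₀ * r + 0 * -s)) := by
    ring
  refine ⟨product, ?_, primed, ?_⟩
  · rw [product]
    exact sub_le_self _ (by positivity)
  · rw [product, ← primed, sub_eq_self, mul_eq_zero, mul_eq_zero, pow_eq_zero_iff two_ne_zero]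
    simp [hr.ne']
end

section
/- The function F'(x) = (2x+1)(ln x - ln(x+1)) + 1 is strictly increasing on [1, ∞). -/
/-!
The derivative of `F'` is `2 (log x - log (x + 1)) + 1/x + 1/(x + 1)`, which is positive on
`(0, ∞)` because the trapezoidal rule overestimates `∫ₓˣ⁺¹ dt/t = log (x + 1) - log x`;
this in turn is `log v < sinh (log v) = (v - v⁻¹) / 2` for `v = (x + 1) / x > 1`.
-/

open Real Set

lemma log_sub_log_lt_trapezoid {x y : ℝ} (hx : 0 < x) (hxy : x < y) :
    log y - log x < (y - x) * (x⁻¹ + y⁻¹) / 2 := by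
  have hy : 0 < y := hx.trans hxy
  have hlog : 0 < log (y / x) := log_pos ((one_lt_div hx).mpr hxy)
  have key := self_lt_sinh_iff.mpr hlog
  rw [sinh_log (div_pos hy hx), log_div hy.ne' hx.ne'] at key
  convert key using 1
  field_simp
  ring

lemma hasDerivAt_mul_log_sub_log_add_one {x : ℝ} (hx : 0 < x) :
    HasDerivAt (fun x : ℝ => (2 * x + 1) * (log x - log (x + 1)) + 1)
      (2 * (log x - log (x + 1)) + (2 * x + 1) * (x⁻¹ - (x + 1)⁻¹)) x := by
  have hlin : HasDerivAt (fun x : ℝ => 2 * x + 1) 2 x := by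
    simpa using ((hasDerivAt_id x).const_mul 2).add_const 1
  have hlog : HasDerivAt (fun x : ℝ => log x - log (x + 1)) (x⁻¹ - (x + 1)⁻¹) x := by
    have hshift : HasDerivAt (fun x : ℝ => log (x + 1)) (x + 1)⁻¹ x := by
      simpa using ((hasDerivAt_id x).add_const 1).log (by positivity)
    exact (hasDerivAt_log hx.ne').sub hshift
  exact (hlin.mul hlog).add_const 1

lemma deriv_mul_log_sub_log_add_one_pos {x : ℝ} (hx : 0 < x) :
    0 < 2 * (log x - log (x + 1)) + (2 * x + 1) * (x⁻¹ - (x + 1)⁻¹) := by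
  have htrap := log_sub_log_lt_trapezoid hx (lt_add_one x)
  have hfactor : (2 * x + 1) * (x⁻¹ - (x + 1)⁻¹) = x⁻¹ + (x + 1)⁻¹ := by
    field_simp
    ring
  rw [hfactor]
  linarith

lemma strictMonoOn_mul_log_sub_log_add_one :
    StrictMonoOn (fun x : ℝ => (2 * x + 1) * (log x - log (x + 1)) + 1) (Ioi 0) := by
  refine strictMonoOn_of_deriv_pos (convex_Ioi 0)
    (fun x hx => (hasDerivAt_mul_log_sub_log_add_one hx).continuousAt.continuousWithinAt)
    fun x hx => ?_
  rw [interior_Ioi] at hx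
  rw [(hasDerivAt_mul_log_sub_log_add_one hx).deriv]
  exact deriv_mul_log_sub_log_add_one_pos hx

/-- The derivative `F'(x) = (2x+1)(ln x - ln(x+1)) + 1` of
`F(x) = x(x+1)(ln x - ln(x+1))` is strictly increasing on `[1, ∞)`. -/
theorem F_prime_strictMonoOn :
    StrictMonoOn (fun x : ℝ => (2 * x + 1) * (Real.log x - Real.log (x + 1)) + 1)
      (Set.Ici 1) :=
  strictMonoOn_mul_log_sub_log_add_one.mono fun x (hx : 1 ≤ x) => show 0 < x by linarith
end

section
/- Define G(x) = F(x) - F(x+1) where F(x) = x(x+1)(ln x - ln(x+1)). Then G is strictly decreasing on [1, ∞); in particular G(2k) < G(k-1) for every integer k ≥ 2. -/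
/-!
With `F x = x (x + 1) (log x - log (x + 1))` one has `F' x = 1 - (2x + 1) log (1 + 1/x)`, and
`G' x = F' x - F' (x + 1)`. So it suffices that `(2x + 1) log (1 + 1/x)` is strictly decreasing
on `(0, ∞)`; its derivative is negative by the bound `log t < sinh (log t) = (t - t⁻¹) / 2`
at `t = 1 + 1/x`.
-/

open Real Set

lemma strictAntiOn_Ioi_of_hasDerivAt_neg {a : ℝ} {f f' : ℝ → ℝ}
    (hf : ∀ x ∈ Ioi a, HasDerivAt f (f' x) x) (hf' : ∀ x ∈ Ioi a, f' x < 0) :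
    StrictAntiOn f (Ioi a) :=
  strictAntiOn_of_deriv_neg (convex_Ioi a)
    (fun x hx => (hf x hx).continuousAt.continuousWithinAt)
    (fun x hx => by
      rw [interior_Ioi] at hx
      rw [(hf x hx).deriv]
      exact hf' x hx)

lemma Real.log_lt_sub_inv_div_two {t : ℝ} (ht : 1 < t) : log t < (t - t⁻¹) / 2 := by
  rw [← sinh_log (by linarith)]
  exact self_lt_sinh_iff.2 (log_pos ht)

lemma Real.two_mul_log_add_one_sub_log_lt {x : ℝ} (hx : 0 < x) :
    2 * (log (x + 1) - log x) < (2 * x + 1) / (x * (x + 1)) := by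
  have h := log_lt_sub_inv_div_two (t := (x + 1) / x) (by rw [lt_div_iff₀ hx]; linarith)
  rw [log_div (by positivity) hx.ne'] at h
  have h_eq : ((x + 1) / x - ((x + 1) / x)⁻¹) / 2 * 2 = (2 * x + 1) / (x * (x + 1)) := by
    field_simp
    ring
  linarith

lemma Real.strictAntiOn_mul_log_add_one_sub_log :
    StrictAntiOn (fun x : ℝ => (2 * x + 1) * (log (x + 1) - log x)) (Ioi 0) := by
  refine strictAntiOn_Ioi_of_hasDerivAt_neg
    (f' := fun x => 2 * (log (x + 1) - log x) - (2 * x + 1) / (x * (x + 1)))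
    (fun x (hx : 0 < x) => ?_) (fun x hx => sub_neg.2 (two_mul_log_add_one_sub_log_lt hx))
  have h_log : HasDerivAt (fun y : ℝ => log (y + 1)) (1 / (x + 1)) x :=
    ((hasDerivAt_id' x).add_const 1).log (by positivity)
  refine (HasDerivAt.mul (((hasDerivAt_id' x).const_mul 2).add_const 1)
    (h_log.sub ((hasDerivAt_id' x).log hx.ne'))).congr_deriv ?_
  simp only [Pi.sub_apply]
  field_simp
  ring

namespace LogGap

noncomputable def F (x : ℝ) : ℝ := x * (x + 1) * (log x - log (x + 1))

noncomputable def G (x : ℝ) : ℝ := F x - F (x + 1)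

noncomputable def derivF (x : ℝ) : ℝ := 1 - (2 * x + 1) * (log (x + 1) - log x)

lemma hasDerivAt_F {x : ℝ} (hx : 0 < x) : HasDerivAt F (derivF x) x := by
  have h_log : HasDerivAt (fun y : ℝ => log (y + 1)) (1 / (x + 1)) x :=
    ((hasDerivAt_id' x).add_const 1).log (by positivity)
  refine (HasDerivAt.mul ((hasDerivAt_id' x).mul ((hasDerivAt_id' x).add_const 1))
    (((hasDerivAt_id' x).log hx.ne').sub h_log)).congr_deriv ?_
  simp only [derivF, Pi.sub_apply, Pi.mul_apply]
  field_simp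
  ring

lemma strictMonoOn_derivF : StrictMonoOn derivF (Ioi 0) := fun a ha b hb hab => by
  have := strictAntiOn_mul_log_add_one_sub_log ha hb hab
  simp only [derivF] at this ⊢
  linarith

lemma strictAntiOn_G : StrictAntiOn G (Ioi 0) := by
  refine strictAntiOn_Ioi_of_hasDerivAt_neg (f' := fun x => derivF x - derivF (x + 1))
    (fun x (hx : 0 < x) => (hasDerivAt_F hx).sub ((hasDerivAt_F (by linarith)).comp_add_const x 1))
    (fun x (hx : 0 < x) => ?_)
  have := strictMonoOn_derivF hx (show (0 : ℝ) < x + 1 by linarith) (lt_add_one x)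
  linarith

end LogGap

/-- `G(x) = F(x) - F(x+1)`, where `F(x) = x(x+1)(ln x - ln(x+1))`, is strictly
decreasing on `[1, ∞)`; in particular `G(2k) < G(k-1)` for every integer `k ≥ 2`. -/
theorem G_strictAntiOn :
    StrictAntiOn (fun x : ℝ =>
        (x * (x + 1) * (Real.log x - Real.log (x + 1)))
          - ((x + 1) * (x + 2) * (Real.log (x + 1) - Real.log (x + 2))))
      (Set.Ici 1) ∧
    ∀ k : ℕ, 2 ≤ k →
      (fun x : ℝ =>
        (x * (x + 1) * (Real.log x - Real.log (x + 1)))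
          - ((x + 1) * (x + 2) * (Real.log (x + 1) - Real.log (x + 2)))) (2 * k)
      < (fun x : ℝ =>
        (x * (x + 1) * (Real.log x - Real.log (x + 1)))
          - ((x + 1) * (x + 2) * (Real.log (x + 1) - Real.log (x + 2)))) ((k : ℝ) - 1) := by
  have hG : (fun x : ℝ =>
        (x * (x + 1) * (Real.log x - Real.log (x + 1)))
          - ((x + 1) * (x + 2) * (Real.log (x + 1) - Real.log (x + 2)))) = LogGap.G := by
    funext x
    simp only [LogGap.G, LogGap.F, add_assoc, one_add_one_eq_two]
  have hanti : StrictAntiOn LogGap.G (Ici 1) :=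
    LogGap.strictAntiOn_G.mono fun x (hx : 1 ≤ x) => show 0 < x by linarith
  rw [hG]
  refine ⟨hanti, fun k hk => ?_⟩
  have hk' : (2 : ℝ) ≤ k := by exact_mod_cast hk
  exact hanti (show (1 : ℝ) ≤ k - 1 by linarith) (show (1 : ℝ) ≤ 2 * k by linarith) (by linarith)
end

section
/- For every integer k ≥ 2, the inequality (2k/(2k+1))^{2k(2k+1)/2} · ((2k+2)/(2k+1))^{(2k+1)(2k+2)/2} < ((k-1)/k)^{(k-1)k/2} · ((k+1)/k)^{k(k+1)/2} holds. -/
/-!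
Taking logarithms, the inequality reads `G (2k) < G (k - 1)` with `G x = F x - F (x + 1)`
and `F x = x (x + 1) (log x - log (x + 1))`. Writing `u = 1 / (2x + 1)`, one has
`log (1 + 1/x) = log (1 + u) - log (1 - u) = 2 ∑ u ^ (2n + 1) / (2n + 1)`; keeping two terms of
this series, or bounding its tail by a geometric series, pins `F x` down to
`-(x + 1/2) + u/3` up to an error in `[0, u³/6]`. These bounds separate `G (2k)` from `G (k - 1)`
by a rational inequality in `k`.
-/

open Real

theorem two_mul_add_le_log_sub_log {u : ℝ} (hu0 : 0 ≤ u) (hu1 : u < 1) :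
    2 * u + 2 / 3 * u ^ 3 ≤ log (1 + u) - log (1 - u) := by
  have hs := hasSum_log_sub_log_of_abs_lt_one (abs_lt.2 ⟨by linarith, hu1⟩)
  calc 2 * u + 2 / 3 * u ^ 3
      = ∑ n ∈ Finset.range 2, 2 * (1 / (2 * (n : ℝ) + 1)) * u ^ (2 * n + 1) := by
        norm_num [Finset.sum_range_succ]
    _ ≤ _ := sum_le_hasSum _ (fun n _ => by positivity) hs

theorem log_sub_log_le_two_mul_add {u : ℝ} (hu0 : 0 ≤ u) (hu1 : u < 1) :
    log (1 + u) - log (1 - u) ≤ 2 * u + 2 / 3 * u ^ 3 / (1 - u ^ 2) := by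
  have hs := hasSum_log_sub_log_of_abs_lt_one (abs_lt.2 ⟨by linarith, hu1⟩)
  have htail := (hasSum_nat_add_iff' 1).2 hs
  have hgeom :=
    (hasSum_geometric_of_lt_one (sq_nonneg u) (by nlinarith)).mul_left (2 / 3 * u ^ 3)
  have hle := hasSum_le (fun n => ?_) htail hgeom
  · norm_num at hle
    rw [div_eq_mul_inv]
    linarith
  · have hcoef : 2 * (1 / (2 * ((n + 1 : ℕ) : ℝ) + 1)) ≤ 2 / 3 := by
      rw [mul_one_div, div_le_div_iff₀ (by positivity) (by norm_num)]
      push_cast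
      linarith [(n.cast_nonneg : (0 : ℝ) ≤ n)]
    calc 2 * (1 / (2 * ((n + 1 : ℕ) : ℝ) + 1)) * u ^ (2 * (n + 1) + 1)
        ≤ 2 / 3 * u ^ (2 * (n + 1) + 1) := by gcongr
      _ = 2 / 3 * u ^ 3 * (u ^ 2) ^ n := by ring

theorem log_one_add_inv_eq_log_sub_log {x : ℝ} (hx : 0 < x) :
    log (1 + x⁻¹) = log (1 + 1 / (2 * x + 1)) - log (1 - 1 / (2 * x + 1)) :=
  (hasSum_log_one_add_inv hx).unique <| hasSum_log_sub_log_of_abs_lt_one <| by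
    rw [abs_of_pos (by positivity), div_lt_one (by linarith)]
    linarith

noncomputable section

namespace PyramidComparison

def F (x : ℝ) : ℝ := x * (x + 1) * (log x - log (x + 1))

def G (x : ℝ) : ℝ := F x - F (x + 1)

def comparisonProduct (x : ℝ) : ℝ :=
  (x / (x + 1)) ^ (x * (x + 1) / 2) * ((x + 2) / (x + 1)) ^ ((x + 1) * (x + 2) / 2)

variable {x : ℝ}

theorem F_eq (hx : 0 < x) :
    F x = -(x * (x + 1)) * (log (1 + 1 / (2 * x + 1)) - log (1 - 1 / (2 * x + 1))) := by
  rw [F, ← log_one_add_inv_eq_log_sub_log hx, show 1 + x⁻¹ = (x + 1) / x by field_simp,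
    log_div (by positivity) hx.ne']
  ring

theorem F_le (hx : 0 < x) :
    F x ≤ -(x + 1 / 2) + 1 / (3 * (2 * x + 1)) + 1 / (6 * (2 * x + 1) ^ 3) := by
  have hu : 1 / (2 * x + 1) < 1 := by rw [div_lt_one (by linarith)]; linarith
  calc F x = _ := F_eq hx
    _ ≤ -(x * (x + 1)) * (2 * (1 / (2 * x + 1)) + 2 / 3 * (1 / (2 * x + 1)) ^ 3) :=
      mul_le_mul_of_nonpos_left (two_mul_add_le_log_sub_log (by positivity) hu) (by nlinarith)
    _ = _ := by field_simp; ring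

theorem le_F (hx : 0 < x) :
    -(x + 1 / 2) + 1 / (3 * (2 * x + 1)) ≤ F x := by
  have hu : 1 / (2 * x + 1) < 1 := by rw [div_lt_one (by linarith)]; linarith
  have hden : 1 - (1 / (2 * x + 1)) ^ 2 = 4 * x * (x + 1) / (2 * x + 1) ^ 2 := by
    field_simp; ring
  calc -(x + 1 / 2) + 1 / (3 * (2 * x + 1))
      = -(x * (x + 1)) * (2 * (1 / (2 * x + 1))
          + 2 / 3 * (1 / (2 * x + 1)) ^ 3 / (1 - (1 / (2 * x + 1)) ^ 2)) := by
        rw [hden]; field_simp; ring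
    _ ≤ _ := mul_le_mul_of_nonpos_left (log_sub_log_le_two_mul_add (by positivity) hu)
        (by nlinarith)
    _ = F x := (F_eq hx).symm

theorem two_div_eq_one_div_sub_one_div (hx : 0 < x) :
    2 / (3 * (2 * x + 1) * (2 * x + 3)) = 1 / (3 * (2 * x + 1)) - 1 / (3 * (2 * (x + 1) + 1)) := by
  field_simp
  ring

theorem G_le (hx : 0 < x) :
    G x ≤ 1 + 2 / (3 * (2 * x + 1) * (2 * x + 3)) + 1 / (6 * (2 * x + 1) ^ 3) := by
  have hF := F_le hx
  have hF₁ := le_F (x := x + 1) (by linarith)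
  rw [G, two_div_eq_one_div_sub_one_div hx]
  linarith

theorem le_G (hx : 0 < x) :
    1 + 2 / (3 * (2 * x + 1) * (2 * x + 3)) - 1 / (6 * (2 * x + 3) ^ 3) ≤ G x := by
  have hF := le_F hx
  have hF₁ := F_le (x := x + 1) (by linarith)
  rw [G, two_div_eq_one_div_sub_one_div hx, show 2 * x + 3 = 2 * (x + 1) + 1 by ring]
  linarith

theorem G_two_mul_add_two_lt (hx : 0 < x) : G (2 * x + 2) < G x := by
  have hgap : 2 / (3 * (2 * (2 * x + 2) + 1) * (2 * (2 * x + 2) + 3))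
        + 1 / (6 * (2 * (2 * x + 2) + 1) ^ 3)
      < 2 / (3 * (2 * x + 1) * (2 * x + 3)) - 1 / (6 * (2 * x + 3) ^ 3) := by
    -- cleared of its (positive) denominators, the difference has positive coefficients in `x`
    rw [← sub_pos]
    field_simp
    ring_nf
    positivity
  linarith [G_le (x := 2 * x + 2) (by linarith), le_G hx]

theorem comparisonProduct_pos (hx : 0 < x) : 0 < comparisonProduct x := by
  unfold comparisonProduct
  positivity

theorem log_comparisonProduct (hx : 0 < x) : log (comparisonProduct x) = G x / 2 := by
  rw [comparisonProduct, log_mul (by positivity) (by positivity),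
    log_rpow (by positivity), log_rpow (by positivity),
    log_div (by positivity) (by positivity), log_div (by positivity) (by positivity),
    G, F, F, show x + 1 + 1 = x + 2 by ring]
  ring

theorem comparisonProduct_two_mul_add_two_lt (hx : 0 < x) :
    comparisonProduct (2 * x + 2) < comparisonProduct x := by
  rw [← log_lt_log_iff (comparisonProduct_pos (by linarith)) (comparisonProduct_pos hx),
    log_comparisonProduct (by linarith), log_comparisonProduct hx]
  linarith [G_two_mul_add_two_lt hx]

end PyramidComparison

end

/-- Inequality (3.5): for every integer `k ≥ 2`,
`(2k/(2k+1))^{2k(2k+1)/2} ((2k+2)/(2k+1))^{(2k+1)(2k+2)/2}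
  < ((k-1)/k)^{(k-1)k/2} ((k+1)/k)^{k(k+1)/2}`. -/
theorem pyramid_comparison_inequality (k : ℕ) (hk : 2 ≤ k) :
    ((2 * k : ℝ) / (2 * k + 1)) ^ ((2 * (k : ℝ) * (2 * k + 1)) / 2)
        * ((2 * (k : ℝ) + 2) / (2 * k + 1)) ^ (((2 * (k : ℝ) + 1) * (2 * k + 2)) / 2)
      < (((k : ℝ) - 1) / k) ^ ((((k : ℝ) - 1) * k) / 2)
        * (((k : ℝ) + 1) / k) ^ (((k : ℝ) * (k + 1)) / 2) := by
  have hk₁ : (0 : ℝ) < k - 1 := by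
    have : (2 : ℝ) ≤ k := by exact_mod_cast hk
    linarith
  have h := PyramidComparison.comparisonProduct_two_mul_add_two_lt hk₁
  rw [show 2 * ((k : ℝ) - 1) + 2 = 2 * k by ring] at h
  simpa only [PyramidComparison.comparisonProduct, sub_add_cancel,
    show (k : ℝ) - 1 + 2 = k + 1 by ring] using h
end

section
/- The function H(x) = -F(x) - F(d-x), where F(x) = x(x+1)(ln x - ln(x+1)) and d > 2 is fixed, is strictly increasing on [1, d/2) and strictly decreasing on (d/2, d-1]; consequently, over integers k with 1 ≤ k ≤ d-1, H(k) is maximized at k = floor(d/2) (equivalently at k = ceil(d/2)). -/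
/-!
Write `F x = x (x + 1) (log x - log (x + 1))`, so that `H x = -F x - F (d - x)` and
`H' x = F' (d - x) - F' x`. The whole point is that `F'` is strictly increasing on `(0, ∞)`:
then `H' x > 0` exactly when `x < d - x`, and since `H` is symmetric about `d / 2` every integer
value `H k` equals one at an integer in `[1, ⌊d/2⌋]`, where `H` increases.

Monotonicity of `F'` amounts to `log (x + 1) - log x < (1/x + 1/(x+1)) / 2`, the trapezoidal
rule overestimating the integral of the convex function `1/t` over `[x, x + 1]`.
-/

open Real Set

lemma log_one_add_lt_trapezoid {u : ℝ} (hu : 0 < u) :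
    log (1 + u) < u / 2 + u / (2 * (1 + u)) := by
  let g : ℝ → ℝ := fun u => u / 2 + u / (2 * (1 + u)) - log (1 + u)
  have hg : ∀ u, 0 ≤ u → HasDerivAt g (u ^ 2 / (2 * (1 + u) ^ 2)) u := by
    intro u hu
    have h1u : 1 + u ≠ 0 := by positivity
    have hlin : HasDerivAt (fun u : ℝ => 1 + u) 1 u := (hasDerivAt_id' u).const_add 1
    refine ((((hasDerivAt_id' u).div_const 2).fun_add ((hasDerivAt_id' u).fun_div
      (hlin.const_mul 2) (by positivity))).fun_sub (hlin.log h1u)).congr_deriv ?_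
    field_simp
    ring
  have hmono : StrictMonoOn g (Ici 0) := by
    refine strictMonoOn_of_deriv_pos (convex_Ici 0)
      (fun u hu => (hg u hu).continuousAt.continuousWithinAt) fun u hu => ?_
    rw [interior_Ici, mem_Ioi] at hu
    rw [(hg u hu.le).deriv]
    positivity
  have := hmono (mem_Ici.mpr le_rfl) hu.le hu
  norm_num [g] at this
  linarith

lemma log_add_one_sub_log_lt {x : ℝ} (hx : 0 < x) :
    log (x + 1) - log x < (x⁻¹ + (x + 1)⁻¹) / 2 := by
  have h := log_one_add_lt_trapezoid (inv_pos.mpr hx)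
  have hlog : log (1 + x⁻¹) = log (x + 1) - log x := by
    rw [← log_div (by positivity) hx.ne']
    congr 1
    field_simp
  have hrhs : x⁻¹ / 2 + x⁻¹ / (2 * (1 + x⁻¹)) = (x⁻¹ + (x + 1)⁻¹) / 2 := by
    field_simp
  rwa [hlog, hrhs] at h

noncomputable def quadLogRatio (x : ℝ) : ℝ := x * (x + 1) * (log x - log (x + 1))

noncomputable def quadLogRatioDeriv (x : ℝ) : ℝ := (2 * x + 1) * (log x - log (x + 1)) + 1

lemma hasDerivAt_log_sub_log_add_one {x : ℝ} (hx : 0 < x) :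
    HasDerivAt (fun x => log x - log (x + 1)) (x⁻¹ - (x + 1)⁻¹) x := by
  simpa using (hasDerivAt_log hx.ne').fun_sub (((hasDerivAt_id x).add_const 1).log (by positivity))

lemma hasDerivAt_quadLogRatio {x : ℝ} (hx : 0 < x) :
    HasDerivAt quadLogRatio (quadLogRatioDeriv x) x := by
  refine (((hasDerivAt_id' x).fun_mul ((hasDerivAt_id' x).add_const 1)).fun_mul
    (hasDerivAt_log_sub_log_add_one hx)).congr_deriv ?_
  rw [quadLogRatioDeriv]
  field_simp
  ring

lemma hasDerivAt_quadLogRatioDeriv {x : ℝ} (hx : 0 < x) :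
    HasDerivAt quadLogRatioDeriv (x⁻¹ + (x + 1)⁻¹ - 2 * (log (x + 1) - log x)) x := by
  refine (((((hasDerivAt_id' x).const_mul 2).add_const 1).fun_mul
    (hasDerivAt_log_sub_log_add_one hx)).add_const 1).congr_deriv ?_
  field_simp
  ring

lemma strictMonoOn_quadLogRatioDeriv : StrictMonoOn quadLogRatioDeriv (Ioi 0) := by
  refine strictMonoOn_of_deriv_pos (convex_Ioi 0)
    (fun x hx => (hasDerivAt_quadLogRatioDeriv hx).continuousAt.continuousWithinAt)
    fun x hx => ?_
  rw [interior_Ioi] at hx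
  rw [(hasDerivAt_quadLogRatioDeriv hx).deriv]
  linarith [log_add_one_sub_log_lt hx]

section Reflection

variable {F F' : ℝ → ℝ} {D : ℝ}

lemma hasDerivAt_neg_sub_reflect (hF : ∀ x, 0 < x → HasDerivAt F (F' x) x) {x : ℝ}
    (hx : x ∈ Ioo 0 D) :
    HasDerivAt (fun x => -F x - F (D - x)) (F' (D - x) - F' x) x := by
  refine ((hF x hx.1).fun_neg.fun_sub ((hF (D - x) (sub_pos.mpr hx.2)).comp x
    ((hasDerivAt_id' x).const_sub D))).congr_deriv ?_
  ring

lemma continuousOn_neg_sub_reflect (hF : ∀ x, 0 < x → HasDerivAt F (F' x) x) :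
    ContinuousOn (fun x => -F x - F (D - x)) (Ioo 0 D) := fun _ hx =>
  (hasDerivAt_neg_sub_reflect hF hx).continuousAt.continuousWithinAt

lemma strictMonoOn_neg_sub_reflect (hF : ∀ x, 0 < x → HasDerivAt F (F' x) x)
    (hF' : StrictMonoOn F' (Ioi 0)) :
    StrictMonoOn (fun x => -F x - F (D - x)) (Ioc 0 (D / 2)) := by
  refine strictMonoOn_of_deriv_pos (convex_Ioc 0 (D / 2))
    ((continuousOn_neg_sub_reflect hF).mono fun x hx => ⟨hx.1, by linarith [hx.1, hx.2]⟩)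
    fun x hx => ?_
  rw [interior_Ioc] at hx
  have hx' : x ∈ Ioo 0 D := ⟨hx.1, by linarith [hx.1, hx.2]⟩
  rw [(hasDerivAt_neg_sub_reflect hF hx').deriv, sub_pos]
  exact hF' hx.1 (sub_pos.mpr hx'.2) (by linarith [hx.2])

lemma strictAntiOn_neg_sub_reflect (hF : ∀ x, 0 < x → HasDerivAt F (F' x) x)
    (hF' : StrictMonoOn F' (Ioi 0)) :
    StrictAntiOn (fun x => -F x - F (D - x)) (Ico (D / 2) D) := by
  refine strictAntiOn_of_deriv_neg (convex_Ico (D / 2) D)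
    ((continuousOn_neg_sub_reflect hF).mono fun x hx => ⟨by linarith [hx.1, hx.2], hx.2⟩)
    fun x hx => ?_
  rw [interior_Ico] at hx
  have hx' : x ∈ Ioo 0 D := ⟨by linarith [hx.1, hx.2], hx.2⟩
  rw [(hasDerivAt_neg_sub_reflect hF hx').deriv, sub_neg]
  exact hF' (sub_pos.mpr hx'.2) hx'.1 (by linarith [hx.1])

end Reflection

lemma apply_le_apply_half_of_monotoneOn {G : ℝ → ℝ} {d k : ℕ}
    (hsymm : ∀ x, G (d - x) = G x) (hmono : MonotoneOn G (Ioc 0 (d / 2)))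
    (hk : 1 ≤ k) (hkd : k ≤ d - 1) :
    G k ≤ G (d / 2 : ℕ) := by
  have mem : ∀ j : ℕ, 1 ≤ j → j ≤ d / 2 → (j : ℝ) ∈ Ioc 0 ((d : ℝ) / 2) :=
    fun j hj hjd => ⟨by positivity, (Nat.cast_le.mpr hjd).trans Nat.cast_div_le⟩
  have hhalf := mem (d / 2) (by omega) le_rfl
  rcases le_or_gt k (d / 2) with hkh | hkh
  · exact hmono (mem k hk hkh) hhalf (by exact_mod_cast hkh)
  · have hcast : ((d - k : ℕ) : ℝ) = d - k := Nat.cast_sub (by omega)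
    rw [← hsymm, ← hcast]
    exact hmono (mem (d - k) (by omega) (by omega)) hhalf (by exact_mod_cast (by omega))

theorem H_max_at_half_general (d : ℕ) :
    StrictMonoOn (fun x : ℝ =>
        -(x * (x + 1) * (Real.log x - Real.log (x + 1)))
          - ((d - x) * ((d - x) + 1) * (Real.log (d - x) - Real.log ((d - x) + 1))))
      (Set.Ico 1 ((d : ℝ) / 2)) ∧
    StrictAntiOn (fun x : ℝ =>
        -(x * (x + 1) * (Real.log x - Real.log (x + 1)))
          - ((d - x) * ((d - x) + 1) * (Real.log (d - x) - Real.log ((d - x) + 1))))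
      (Set.Ioc ((d : ℝ) / 2) ((d : ℝ) - 1)) ∧
    ∀ k : ℕ, 1 ≤ k → k ≤ d - 1 →
      (fun x : ℝ =>
        -(x * (x + 1) * (Real.log x - Real.log (x + 1)))
          - ((d - x) * ((d - x) + 1) * (Real.log (d - x) - Real.log ((d - x) + 1)))) (k : ℝ)
      ≤ (fun x : ℝ =>
        -(x * (x + 1) * (Real.log x - Real.log (x + 1)))
          - ((d - x) * ((d - x) + 1) * (Real.log (d - x) - Real.log ((d - x) + 1))))
          ((d / 2 : ℕ) : ℝ) := by
  have hF : ∀ x : ℝ, 0 < x → HasDerivAt quadLogRatio (quadLogRatioDeriv x) x :=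
    fun _ => hasDerivAt_quadLogRatio
  have hmono := strictMonoOn_neg_sub_reflect (D := d) hF strictMonoOn_quadLogRatioDeriv
  have hanti := strictAntiOn_neg_sub_reflect (D := d) hF strictMonoOn_quadLogRatioDeriv
  refine ⟨hmono.mono fun x hx => ⟨by linarith [hx.1], hx.2.le⟩,
    hanti.mono fun x hx => ⟨hx.1.le, by linarith [hx.2]⟩,
    fun k hk hkd => apply_le_apply_half_of_monotoneOn (fun x => ?_) hmono.monotoneOn hk hkd⟩
  simp only [quadLogRatio, sub_sub_cancel]
  ring

/-- `H(x) = -F(x) - F(d-x)`, where `F(x) = x(x+1)(ln x - ln(x+1))`, is strictly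
increasing on `[1, d/2)` and strictly decreasing on `(d/2, d-1]`; consequently, over
integers `1 ≤ k ≤ d-1`, `H(k)` is maximized at `k = ⌊d/2⌋`. -/
theorem H_max_at_half (d : ℕ) (hd : 3 ≤ d) :
    StrictMonoOn (fun x : ℝ =>
        -(x * (x + 1) * (Real.log x - Real.log (x + 1)))
          - ((d - x) * ((d - x) + 1) * (Real.log (d - x) - Real.log ((d - x) + 1))))
      (Set.Ico 1 ((d : ℝ) / 2)) ∧
    StrictAntiOn (fun x : ℝ =>
        -(x * (x + 1) * (Real.log x - Real.log (x + 1)))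
          - ((d - x) * ((d - x) + 1) * (Real.log (d - x) - Real.log ((d - x) + 1))))
      (Set.Ioc ((d : ℝ) / 2) ((d : ℝ) - 1)) ∧
    ∀ k : ℕ, 1 ≤ k → k ≤ d - 1 →
      (fun x : ℝ =>
        -(x * (x + 1) * (Real.log x - Real.log (x + 1)))
          - ((d - x) * ((d - x) + 1) * (Real.log (d - x) - Real.log ((d - x) + 1)))) (k : ℝ)
      ≤ (fun x : ℝ =>
        -(x * (x + 1) * (Real.log x - Real.log (x + 1)))
          - ((d - x) * ((d - x) + 1) * (Real.log (d - x) - Real.log ((d - x) + 1))))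
          ((d / 2 : ℕ) : ℝ) :=
  H_max_at_half_general d
end

section
/- Let L(x) = (x(x-1)/2)(ln x - ln(x-1)) for x > 1. Then L''(x) < 0 on (1, ∞), i.e., L is strictly concave on (1,∞). -/
/-!
Differentiating twice gives `L'' x = log x - log (x - 1) - (x⁻¹ + (x - 1)⁻¹) / 2`, the error of the
trapezoidal rule for `∫_{x-1}^x dt / t`. With `y = x / (x - 1)` this is `log y - sinh (log y)`,
which is negative because `t < sinh t` for `t > 0`.
-/

open Real Set

lemma Real.log_lt_sub_inv_div_two_s14 {y : ℝ} (hy : 1 < y) : log y < (y - y⁻¹) / 2 := by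
  rw [← sinh_log (by linarith)]
  exact self_lt_sinh_iff.2 (log_pos hy)

lemma Real.log_sub_log_sub_one_lt {x : ℝ} (hx : 1 < x) :
    log x - log (x - 1) < (x⁻¹ + (x - 1)⁻¹) / 2 := by
  have hx1 : 0 < x - 1 := by linarith
  have hy : 1 < x / (x - 1) := by rw [one_lt_div hx1]; linarith
  have key := log_lt_sub_inv_div_two_s14 hy
  rw [log_div (by linarith) hx1.ne', inv_div] at key
  convert key using 1
  field_simp
  ring

noncomputable def L (t : ℝ) : ℝ := t * (t - 1) / 2 * (log t - log (t - 1))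

lemma hasDerivAt_log_sub_log_sub_one {x : ℝ} (hx : 1 < x) :
    HasDerivAt (fun t => log t - log (t - 1)) (x⁻¹ - (x - 1)⁻¹) x := by
  have hx0 : x ≠ 0 := by positivity
  have hx1 : x - 1 ≠ 0 := sub_ne_zero.2 hx.ne'
  exact (hasDerivAt_log hx0).sub <|
    (((hasDerivAt_id' x).sub_const 1).log hx1).congr_deriv (one_div _)

lemma hasDerivAt_L {x : ℝ} (hx : 1 < x) :
    HasDerivAt L ((x - 1 / 2) * (log x - log (x - 1)) - 1 / 2) x := by
  have hpoly : HasDerivAt (fun t : ℝ => t * (t - 1) / 2) (x - 1 / 2) x :=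
    (((hasDerivAt_id' x).mul ((hasDerivAt_id' x).sub_const 1)).div_const 2).congr_deriv
      (by ring)
  refine (hpoly.mul (hasDerivAt_log_sub_log_sub_one hx)).congr_deriv ?_
  have : x - 1 ≠ 0 := sub_ne_zero.2 hx.ne'
  field_simp
  ring

lemma hasDerivAt_deriv_L {x : ℝ} (hx : 1 < x) :
    HasDerivAt (deriv L) (log x - log (x - 1) - (x⁻¹ + (x - 1)⁻¹) / 2) x := by
  have hderiv : deriv L =ᶠ[nhds x] fun t => (t - 1 / 2) * (log t - log (t - 1)) - 1 / 2 := by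
    filter_upwards [Ioi_mem_nhds hx] with t ht
    exact (hasDerivAt_L ht).deriv
  refine HasDerivAt.congr_of_eventuallyEq ?_ hderiv
  refine ((((hasDerivAt_id' x).sub_const (1 / 2)).mul
    (hasDerivAt_log_sub_log_sub_one hx)).sub_const (1 / 2)).congr_deriv ?_
  have : x - 1 ≠ 0 := sub_ne_zero.2 hx.ne'
  field_simp
  ring

lemma deriv2_L_neg {x : ℝ} (hx : 1 < x) : deriv^[2] L x < 0 := by
  rw [Function.iterate_succ_apply', Function.iterate_one, (hasDerivAt_deriv_L hx).deriv]
  linarith [log_sub_log_sub_one_lt hx]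

/-- `L(x) = (x(x-1)/2)(ln x - ln(x-1))` has negative second derivative on `(1, ∞)`,
i.e. `L` is strictly concave on `(1, ∞)`. -/
theorem L_strictly_concave :
    (∀ x : ℝ, 1 < x →
      iteratedDeriv 2 (fun t : ℝ => t * (t - 1) / 2 * (Real.log t - Real.log (t - 1))) x < 0) ∧
    StrictConcaveOn ℝ (Set.Ioi 1)
      (fun t : ℝ => t * (t - 1) / 2 * (Real.log t - Real.log (t - 1))) := by
  refine ⟨fun x hx => ?_, ?_⟩
  · rw [iteratedDeriv_eq_iterate]
    exact deriv2_L_neg hx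
  · exact strictConcaveOn_of_deriv2_neg' (convex_Ioi 1)
      (fun x hx => (hasDerivAt_L hx).continuousAt.continuousWithinAt) fun x hx => deriv2_L_neg hx
end
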